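/- arXiv:1603.06313 — 2 statements merged into one kernel-verified Lean document; each statement's English description precedes it below -/
import Mathlib

section
/- Abstract ℓ{2,1} recovery bound from a group null space property: Suppose z = β̂ − β* satisfies the group null space property Σ_{G∈T} ‖z_G‖₂ ≤ ρ · Σ_{G∈M} ‖z_G‖₂ for every set T of at most k groups, with ρ < 1/2, and suppose ‖β̂‖₂,₁ ≤ ‖β*‖₂,₁. Then ‖β* − β̂‖₂,₁ ≤ (2/(1−2ρ)) · ‖β* − β*_{M_k*}‖₂,₁, where M_k* is the best k-group approximation of β*. -/
/-- The l2 norm of the restriction of `w` to group `G j`. -/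
noncomputable def groupL2 {p M : ℕ} (G : Fin M → Finset (Fin p)) (j : Fin M) (w : Fin p → ℝ) : ℝ :=
  Real.sqrt (∑ i ∈ G j, w i ^ 2)

/-- The ℓ_{2,1} norm of `w` with respect to the group structure `G`. -/
noncomputable def norm21 {p M : ℕ} (G : Fin M → Finset (Fin p)) (w : Fin p → ℝ) : ℝ :=
  ∑ j : Fin M, groupL2 G j w

/-- Restriction of `w` to the union of the groups indexed by `T`. -/
def restrict {p M : ℕ} (G : Fin M → Finset (Fin p)) (T : Finset (Fin M)) (w : Fin p → ℝ) :
    Fin p → ℝ :=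
  fun i => if i ∈ T.biUnion G then w i else 0

/-- The ℓ₁ norm of `w`. -/
noncomputable def norm1 {p : ℕ} (w : Fin p → ℝ) : ℝ := ∑ i, |w i|

private lemma sqrt_sum_sq_add_le {n : ℕ} (s : Finset (Fin n)) (u v : Fin n → ℝ) :
    Real.sqrt (∑ i ∈ s, (u i + v i) ^ 2) ≤
      Real.sqrt (∑ i ∈ s, u i ^ 2) + Real.sqrt (∑ i ∈ s, v i ^ 2) := by
  set A := ∑ i ∈ s, u i ^ 2 with hAdef
  set B := ∑ i ∈ s, v i ^ 2 with hBdef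
  have hA : (0:ℝ) ≤ A := Finset.sum_nonneg fun i _ => sq_nonneg _
  have hB : (0:ℝ) ≤ B := Finset.sum_nonneg fun i _ => sq_nonneg _
  have hcs : ∑ i ∈ s, u i * v i ≤ Real.sqrt A * Real.sqrt B := by
    have h := Finset.sum_mul_sq_le_sq_mul_sq s u v
    calc ∑ i ∈ s, u i * v i ≤ |∑ i ∈ s, u i * v i| := le_abs_self _
      _ = Real.sqrt ((∑ i ∈ s, u i * v i) ^ 2) := (Real.sqrt_sq_eq_abs _).symm
      _ ≤ Real.sqrt (A * B) := Real.sqrt_le_sqrt h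
      _ = Real.sqrt A * Real.sqrt B := Real.sqrt_mul hA _
  have key : ∑ i ∈ s, (u i + v i) ^ 2 ≤ (Real.sqrt A + Real.sqrt B) ^ 2 := by
    have hexp : ∑ i ∈ s, (u i + v i) ^ 2 = A + B + 2 * ∑ i ∈ s, u i * v i := by
      rw [hAdef, hBdef]
      rw [← Finset.sum_add_distrib, Finset.mul_sum, ← Finset.sum_add_distrib]
      apply Finset.sum_congr rfl; intro i _; ring
    rw [hexp]
    have h2 : (Real.sqrt A + Real.sqrt B) ^ 2 = A + B + 2 * (Real.sqrt A * Real.sqrt B) := by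
      rw [add_sq, Real.sq_sqrt hA, Real.sq_sqrt hB]; ring
    rw [h2]; linarith
  calc Real.sqrt (∑ i ∈ s, (u i + v i) ^ 2) ≤ Real.sqrt ((Real.sqrt A + Real.sqrt B) ^ 2) :=
        Real.sqrt_le_sqrt key
    _ = Real.sqrt A + Real.sqrt B := Real.sqrt_sq (by positivity)

private lemma groupL2_congr_sq {p M : ℕ} (G : Fin M → Finset (Fin p)) (j : Fin M)
    (x y : Fin p → ℝ) (h : ∀ i, x i ^ 2 = y i ^ 2) : groupL2 G j x = groupL2 G j y := by
  unfold groupL2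
  congr 1
  exact Finset.sum_congr rfl fun i _ => h i

private lemma groupL2_nonneg {p M : ℕ} (G : Fin M → Finset (Fin p)) (j : Fin M)
    (x : Fin p → ℝ) : 0 ≤ groupL2 G j x := Real.sqrt_nonneg _

/-- reverse triangle: ‖x‖ ≤ ‖y‖ + ‖x - y‖ -/
private lemma groupL2_le_add {p M : ℕ} (G : Fin M → Finset (Fin p)) (j : Fin M)
    (x y : Fin p → ℝ) : groupL2 G j x ≤ groupL2 G j y + groupL2 G j (x - y) := by
  have h := sqrt_sum_sq_add_le (G j) y (fun i => x i - y i)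
  unfold groupL2
  simpa using h

theorem stmt5 (p M g k : ℕ) (hp : p = M * g)
    (G : Fin M → Finset (Fin p))
    (hcard : ∀ j, (G j).card = g)
    (hdisj : ∀ j j', j ≠ j' → Disjoint (G j) (G j'))
    (hcover : ∀ i : Fin p, ∃ j, i ∈ G j)
    (ρ : ℝ) (hρ : 0 ≤ ρ ∧ ρ < 1 / 2)
    (βs βh : Fin p → ℝ)
    (hmin : norm21 G βh ≤ norm21 G βs)
    (hNSP : ∀ T : Finset (Fin M), T.card ≤ k →
      ∑ j ∈ T, groupL2 G j (βh - βs) ≤ ρ * ∑ j : Fin M, groupL2 G j (βh - βs))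
    (Tstar : Finset (Fin M)) (hTstar : Tstar.card = k)
    (hbest : ∀ T : Finset (Fin M), T.card = k →
      ∑ j ∈ T, groupL2 G j βs ≤ ∑ j ∈ Tstar, groupL2 G j βs) :
    norm21 G (βs - βh) ≤ (2 / (1 - 2 * ρ)) * norm21 G (βs - restrict G Tstar βs) := by
  obtain ⟨hρ0, hρ2⟩ := hρ
  set S := Tstar with hS
  set z := βh - βs with hz
  set a := ∑ j ∈ S, groupL2 G j z with ha
  set b := ∑ j ∈ Sᶜ, groupL2 G j z with hb
  set N := ∑ j : Fin M, groupL2 G j z with hN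
  set σ := ∑ j ∈ Sᶜ, groupL2 G j βs with hσ
  have hab : a + b = N := Finset.sum_add_sum_compl S _
  -- groupL2 of z equals groupL2 of βs - βh
  have hzsym : ∀ j, groupL2 G j (βs - βh) = groupL2 G j z := by
    intro j
    apply groupL2_congr_sq
    intro i
    simp [hz, Pi.sub_apply]
    ring
  -- norm21 (βs - βh) = N
  have hNeq : norm21 G (βs - βh) = N := by
    unfold norm21
    exact Finset.sum_congr rfl fun j _ => hzsym j
  -- NSP with Tstar
  have hNSPS : a ≤ ρ * N := hNSP S (le_of_eq hTstar)
  -- Triangle facts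
  have htri1 : ∀ j, groupL2 G j βs - groupL2 G j z ≤ groupL2 G j βh := by
    intro j
    have h := groupL2_le_add G j βs βh
    rw [hzsym j] at h
    linarith
  have htri2 : ∀ j, groupL2 G j z - groupL2 G j βs ≤ groupL2 G j βh := by
    intro j
    have h := groupL2_le_add G j z βh
    have heq : groupL2 G j (z - βh) = groupL2 G j βs := by
      apply groupL2_congr_sq
      intro i
      simp only [hz, Pi.sub_apply]
      ring
    rw [heq] at h
    linarith
  -- Sum bound: b ≤ a + 2σ
  have hcone : b ≤ a + 2 * σ := by
    have h1 : ∑ j ∈ S, (groupL2 G j βs - groupL2 G j z) ≤ ∑ j ∈ S, groupL2 G j βh :=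
      Finset.sum_le_sum fun j _ => htri1 j
    have h2 : ∑ j ∈ Sᶜ, (groupL2 G j z - groupL2 G j βs) ≤ ∑ j ∈ Sᶜ, groupL2 G j βh :=
      Finset.sum_le_sum fun j _ => htri2 j
    have hsplit_h : ∑ j ∈ S, groupL2 G j βh + ∑ j ∈ Sᶜ, groupL2 G j βh = norm21 G βh :=
      Finset.sum_add_sum_compl S _
    have hsplit_s : ∑ j ∈ S, groupL2 G j βs + σ = norm21 G βs :=
      Finset.sum_add_sum_compl S _
    rw [Finset.sum_sub_distrib] at h1 h2
    rw [← ha] at h1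
    rw [← hb, ← hσ] at h2
    linarith
  -- Combine: N ≤ 2ρN + 2σ
  have hmain : (1 - 2 * ρ) * N ≤ 2 * σ := by nlinarith
  -- RHS equals 2/(1-2ρ) * σ
  have hres : norm21 G (βs - restrict G S βs) = σ := by
    unfold norm21
    have hterm : ∀ j : Fin M, groupL2 G j (βs - restrict G S βs)
        = if j ∈ S then 0 else groupL2 G j βs := by
      intro j
      by_cases hj : j ∈ S
      · simp only [hj, if_true]
        unfold groupL2
        have : ∀ i ∈ G j, ((βs - restrict G S βs) i) ^ 2 = 0 := by
          intro i hi
          have hmem : i ∈ S.biUnion G := Finset.mem_biUnion.mpr ⟨j, hj, hi⟩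
          simp [restrict, hmem]
        rw [Finset.sum_congr rfl this]
        simp
      · simp only [hj, if_false]
        unfold groupL2
        congr 1
        apply Finset.sum_congr rfl
        intro i hi
        have hnot : i ∉ S.biUnion G := by
          intro hmem
          obtain ⟨j', hj', hij'⟩ := Finset.mem_biUnion.mp hmem
          have hne : j ≠ j' := fun h => hj (h ▸ hj')
          exact (Finset.disjoint_left.mp (hdisj j j' hne)) hi hij'
        simp [restrict, hnot]
    rw [Finset.sum_congr rfl fun j _ => hterm j]
    rw [← Finset.sum_add_sum_compl S (fun j => if j ∈ S then 0 else groupL2 G j βs)]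
    have e1 : ∑ j ∈ S, (if j ∈ S then (0:ℝ) else groupL2 G j βs) = 0 :=
      Finset.sum_eq_zero fun j hj => by simp [hj]
    have e2 : ∑ j ∈ Sᶜ, (if j ∈ S then (0:ℝ) else groupL2 G j βs) = σ :=
      Finset.sum_congr rfl fun j hj => by simp [Finset.mem_compl.mp hj]
    rw [e1, e2, zero_add]
  rw [hNeq, hres]
  have hpos : 0 < 1 - 2 * ρ := by linarith
  rw [div_mul_eq_mul_div, le_div_iff₀ hpos]
  nlinarith
end

section
/- Uniqueness of block-sparse solutions under the group null space property: if every nonzero z ∈ ker(X) satisfies Σ_{G∈T}‖z_G‖₂ < (1/2)Σ_{G∈M}‖z_G‖₂ for all sets T of at most k groups, then any k-block-sparse β* is the unique minimizer of ‖β‖₂,₁ over {β : Xβ = Xβ*}. -/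
lemma minkowski_finset {ι : Type*} (s : Finset ι) (u v : ι → ℝ) :
    Real.sqrt (∑ i ∈ s, (u i + v i) ^ 2) ≤
      Real.sqrt (∑ i ∈ s, u i ^ 2) + Real.sqrt (∑ i ∈ s, v i ^ 2) := by
  set A := Real.sqrt (∑ i ∈ s, u i ^ 2) with hA
  set B := Real.sqrt (∑ i ∈ s, v i ^ 2) with hB
  set C := Real.sqrt (∑ i ∈ s, (u i + v i) ^ 2) with hC
  have hCnn : 0 ≤ C := Real.sqrt_nonneg _
  have hABnn : 0 ≤ A + B := by positivity
  have hC2 : C ^ 2 = ∑ i ∈ s, (u i + v i) ^ 2 := by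
    rw [hC, Real.sq_sqrt (Finset.sum_nonneg fun i _ => sq_nonneg _)]
  have key : C ^ 2 ≤ (A + B) * C := by
    rw [hC2]
    have h1 : ∑ i ∈ s, u i * (u i + v i) ≤ A * C :=
      Real.sum_mul_le_sqrt_mul_sqrt s u (fun i => u i + v i)
    have h2 : ∑ i ∈ s, v i * (u i + v i) ≤ B * C :=
      Real.sum_mul_le_sqrt_mul_sqrt s v (fun i => u i + v i)
    have : ∑ i ∈ s, (u i + v i) ^ 2
        = ∑ i ∈ s, u i * (u i + v i) + ∑ i ∈ s, v i * (u i + v i) := by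
      rw [← Finset.sum_add_distrib]; congr 1; ext i; ring
    rw [this]; nlinarith
  rcases eq_or_lt_of_le hCnn with h | h
  · linarith
  · nlinarith

theorem stmt15 (p n M g k : ℕ) (hp : p = M * g)
    (G : Fin M → Finset (Fin p))
    (hcard : ∀ j, (G j).card = g)
    (hdisj : ∀ j j', j ≠ j' → Disjoint (G j) (G j'))
    (hcover : ∀ i : Fin p, ∃ j, i ∈ G j)
    (X : Matrix (Fin n) (Fin p) ℝ)
    (hNSP : ∀ z : Fin p → ℝ, X.mulVec z = 0 → z ≠ 0 →
      ∀ T : Finset (Fin M), T.card ≤ k →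
        ∑ j ∈ T, groupL2 G j z < (1 / 2) * ∑ j : Fin M, groupL2 G j z)
    (βs : Fin p → ℝ)
    (hsparse : ∃ T : Finset (Fin M), T.card ≤ k ∧ ∀ i, βs i ≠ 0 → ∃ j ∈ T, i ∈ G j) :
    ∀ β : Fin p → ℝ, X.mulVec β = X.mulVec βs → β ≠ βs → norm21 G βs < norm21 G β := by
  intro β hker hne
  obtain ⟨T, hTk, hT⟩ := hsparse
  set z : Fin p → ℝ := β - βs with hzdef
  have hz : X.mulVec z = 0 := by
    rw [hzdef, Matrix.mulVec_sub, hker, sub_self]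
  have hz0 : z ≠ 0 := sub_ne_zero.mpr hne
  have hNS := hNSP z hz hz0 T hTk
  -- βs vanishes outside groups in T
  have hout : ∀ j ∉ T, ∀ i ∈ G j, βs i = 0 := by
    intro j hj i hi
    by_contra h
    obtain ⟨j', hj', hi'⟩ := hT i h
    have : j ≠ j' := fun e => hj (e ▸ hj')
    exact (Finset.disjoint_left.mp (hdisj j j' this) hi) hi'
  -- split the NSP sum
  have hsplit : ∀ w : Fin p → ℝ,
      ∑ j : Fin M, groupL2 G j w = ∑ j ∈ T, groupL2 G j w + ∑ j ∈ Tᶜ, groupL2 G j w :=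
    fun w => (Finset.sum_add_sum_compl T _).symm
  have hNS' : ∑ j ∈ T, groupL2 G j z < ∑ j ∈ Tᶜ, groupL2 G j z := by
    rw [hsplit z] at hNS; linarith
  -- outside T: groupL2 βs = 0 and groupL2 z = groupL2 β
  have hout0 : ∀ j ∈ Tᶜ, groupL2 G j βs = 0 := by
    intro j hj
    have hj' := Finset.mem_compl.mp hj
    unfold groupL2
    rw [Finset.sum_eq_zero fun i hi => by rw [hout j hj' i hi]; ring, Real.sqrt_zero]
  have houtz : ∀ j ∈ Tᶜ, groupL2 G j z = groupL2 G j β := by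
    intro j hj
    have hj' := Finset.mem_compl.mp hj
    unfold groupL2
    congr 1
    exact Finset.sum_congr rfl fun i hi => by
      simp [hzdef, hout j hj' i hi]
  -- on T: triangle inequality
  have htri : ∀ j : Fin M, groupL2 G j βs ≤ groupL2 G j β + groupL2 G j z := by
    intro j
    have : ∀ i, βs i = β i + (-(z i)) := by intro i; simp [hzdef]
    calc groupL2 G j βs = Real.sqrt (∑ i ∈ G j, (β i + (-(z i))) ^ 2) := by
          unfold groupL2; congr 1; exact Finset.sum_congr rfl fun i _ => by rw [← this i]
      _ ≤ Real.sqrt (∑ i ∈ G j, β i ^ 2) + Real.sqrt (∑ i ∈ G j, (-(z i)) ^ 2) :=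
          minkowski_finset (G j) β (fun i => -(z i))
      _ = groupL2 G j β + groupL2 G j z := by
          unfold groupL2; congr 2; exact Finset.sum_congr rfl fun i _ => by ring
  calc norm21 G βs = ∑ j ∈ T, groupL2 G j βs + ∑ j ∈ Tᶜ, groupL2 G j βs := hsplit βs
    _ = ∑ j ∈ T, groupL2 G j βs := by
        rw [Finset.sum_eq_zero hout0]; ring
    _ ≤ ∑ j ∈ T, (groupL2 G j β + groupL2 G j z) :=
        Finset.sum_le_sum fun j _ => htri j
    _ = ∑ j ∈ T, groupL2 G j β + ∑ j ∈ T, groupL2 G j z := Finset.sum_add_distrib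
    _ < ∑ j ∈ T, groupL2 G j β + ∑ j ∈ Tᶜ, groupL2 G j z := by linarith
    _ = ∑ j ∈ T, groupL2 G j β + ∑ j ∈ Tᶜ, groupL2 G j β := by
        rw [Finset.sum_congr rfl houtz]
    _ = norm21 G β := (hsplit β).symm
end
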